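/- Let f be a rational function of degree d ≥ 2 with a repelling fixed point z₀ of multiplier λ, and h the Schröder map at z₀. If D is a Fatou component with f(D) = D and f : D → D injective (a rotation domain), and W is a component of h⁻¹(D) such that for each k, f^k maps the component D^{-k} (containing h(λ^{-k}A_r)) univalently onto D, and h is injective on {|w| < t}, then h is injective on {w ∈ A_r : |w| < |λ|^k t} for every k; consequently A_r contains no critical point of h. -/

import Mathlib

/-!
Since `f ∘ h = h ∘ (lam * ·)`, on `Ar ∩ ball 0 (‖lam‖ ^ k * t)` the map `h` factors as
`f^[k] ∘ h ∘ (lam⁻¹ ^ k * ·)`, a composition of injective maps. These sets exhaust `Ar`, so `h`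
is injective near every point of `Ar`. At a critical point `c` an analytic map is locally
`h c + ψ ^ n` with `n ≥ 2` and `ψ` a local coordinate, and `z ↦ z ^ n` is not injective near `0`.
-/

open Filter Function Metric Set
open scoped Topology

theorem AnalyticAt.two_le_analyticOrderAt_sub_of_deriv_eq_zero {𝕜 E : Type*}
    [NontriviallyNormedField 𝕜] [CharZero 𝕜] [NormedAddCommGroup E] [NormedSpace 𝕜 E]
    [CompleteSpace E] {f : 𝕜 → E} {c : 𝕜} (hf : AnalyticAt 𝕜 f c) (hf' : deriv f c = 0) :
    2 ≤ analyticOrderAt (f · - f c) c := by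
  have h1 : 1 ≤ analyticOrderAt (deriv f) c :=
    Order.one_le_iff_ne_zero.mpr (analyticOrderAt_ne_zero.mpr ⟨hf.deriv, hf'⟩)
  rw [← hf.analyticOrderAt_deriv_add_one]
  exact add_le_add_left h1 1

theorem Complex.not_injOn_pow_of_mem_nhds_zero {n : ℕ} (hn : 2 ≤ n) {W : Set ℂ} (hW : W ∈ 𝓝 0) :
    ¬InjOn (· ^ n) W := by
  set ζ : ℂ := Complex.exp (2 * Real.pi * Complex.I / n)
  have hζ : IsPrimitiveRoot ζ n := Complex.isPrimitiveRoot_exp n (by omega)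
  have hζW : ∀ᶠ v in 𝓝[≠] (0 : ℂ), v ∈ W ∧ ζ * v ∈ W :=
    nhdsWithin_le_nhds (inter_mem hW ((continuous_const_mul ζ).tendsto' 0 0 (mul_zero ζ) hW))
  obtain ⟨v, ⟨hv, hζv⟩, hv0⟩ := (hζW.and self_mem_nhdsWithin).exists
  intro hinj
  have hζv_eq : ζ * v = v := hinj hζv hv (by simp [mul_pow, hζ.pow_eq_one])
  exact hζ.ne_one (by omega) ((mul_eq_right₀ hv0).mp hζv_eq)

theorem AnalyticAt.exists_pow_eventuallyEq {g : ℂ → ℂ} {c : ℂ} (hg : AnalyticAt ℂ g c)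
    (hgc : g c ≠ 0) {n : ℕ} (hn : n ≠ 0) :
    ∃ φ : ℂ → ℂ, AnalyticAt ℂ φ c ∧ (fun z ↦ φ z ^ n) =ᶠ[𝓝 c] g := by
  have hn' : (n : ℂ) ≠ 0 := Nat.cast_ne_zero.mpr hn
  -- dividing by `g c` keeps the argument of `log` near `1`, inside the slit plane
  refine ⟨fun z ↦ g c ^ (n⁻¹ : ℂ) * Complex.exp (Complex.log (g z / g c) / n), ?_, ?_⟩
  · have hlog : AnalyticAt ℂ (fun z ↦ Complex.log (g z / g c)) c :=
      (hg.fun_div analyticAt_const hgc).clog (by simp [hgc])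
    exact analyticAt_const.mul (hlog.fun_div analyticAt_const hn').cexp
  · filter_upwards [hg.continuousAt.eventually_ne hgc] with z hz
    rw [mul_pow, ← Complex.exp_nat_mul, mul_div_cancel₀ _ hn',
      Complex.exp_log (div_ne_zero hz hgc), Complex.cpow_nat_inv_pow _ hn, mul_div_cancel₀ _ hgc]

theorem AnalyticAt.exists_map_nhds_eq_and_sub_eq_pow {f : ℂ → ℂ} {c : ℂ} (hf : AnalyticAt ℂ f c)
    {n : ℕ} (hn : analyticOrderAt (f · - f c) c = n) :
    ∃ ψ : ℂ → ℂ, map ψ (𝓝 c) = 𝓝 0 ∧ ∀ᶠ z in 𝓝 c, f z - f c = ψ z ^ n := by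
  obtain ⟨g, hg, hgc, hfg⟩ := (hf.fun_sub analyticAt_const).analyticOrderAt_eq_natCast.mp hn
  have hn0 : n ≠ 0 := by
    rintro rfl
    simpa [eq_comm, hgc] using hfg.self_of_nhds
  obtain ⟨φ, hφ, hφg⟩ := hg.exists_pow_eventuallyEq hgc hn0
  have hφc : φ c ≠ 0 := fun h0 ↦ hgc (by rw [← hφg.eq_of_nhds, h0, zero_pow hn0])
  refine ⟨fun z ↦ (z - c) * φ z, ?_, ?_⟩
  · have hψ : HasStrictDerivAt (fun z ↦ (z - c) * φ z) (φ c) c := by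
      simpa using
        HasStrictDerivAt.fun_mul ((hasStrictDerivAt_id c).sub_const c) hφ.hasStrictDerivAt
    simpa using hψ.map_nhds_eq hφc
  · filter_upwards [hfg, hφg] with z hfz hφz
    rw [hfz, mul_pow, hφz, smul_eq_mul]

theorem AnalyticAt.deriv_ne_zero_of_injOn {f : ℂ → ℂ} {c : ℂ} {U : Set ℂ}
    (hf : AnalyticAt ℂ f c) (hU : U ∈ 𝓝 c) (hinj : InjOn f U) : deriv f c ≠ 0 := by
  intro hf'
  have htop : analyticOrderAt (f · - f c) c ≠ ⊤ := by
    rw [ne_eq, analyticOrderAt_eq_top]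
    intro hconst
    have hev : ∀ᶠ z in 𝓝[≠] c, z ∈ U ∧ f z - f c = 0 := nhdsWithin_le_nhds (inter_mem hU hconst)
    obtain ⟨z, ⟨hzU, hz⟩, hzc⟩ := (hev.and self_mem_nhdsWithin).exists
    exact hzc (hinj hzU (mem_of_mem_nhds hU) (sub_eq_zero.mp hz))
  set n := analyticOrderNatAt (f · - f c) c
  have hn : analyticOrderAt (f · - f c) c = n := (Nat.cast_analyticOrderNatAt htop).symm
  have hn2 : 2 ≤ n := by
    exact_mod_cast hn ▸ hf.two_le_analyticOrderAt_sub_of_deriv_eq_zero hf'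
  obtain ⟨ψ, hψ, hfψ⟩ := hf.exists_map_nhds_eq_and_sub_eq_pow hn
  set V := U ∩ {z | f z - f c = ψ z ^ n}
  have hV : ψ '' V ∈ 𝓝 0 := hψ ▸ image_mem_map (inter_mem hU hfψ)
  refine Complex.not_injOn_pow_of_mem_nhds_zero hn2 hV (InjOn.image_of_comp ?_)
  rintro a ⟨haU, ha⟩ b ⟨hbU, hb⟩ hab
  have ha' : f a - f c = ψ a ^ n := ha
  have hb' : f b - f c = ψ b ^ n := hb
  exact hinj haU hbU (sub_left_inj.mp (ha'.trans (hab.trans hb'.symm)))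

theorem injOn_inter_ball_of_semiconj {𝕜 X : Type*} [NormedDivisionRing 𝕜] {f : X → X}
    {h : 𝕜 → X} {lam : 𝕜} (hsemi : ∀ w, f (h w) = h (lam * w)) (hlam : lam ≠ 0) {t : ℝ}
    (hinj : InjOn h (ball 0 t)) {A : Set 𝕜} {D : Set X} (k : ℕ)
    (hmaps : ∀ w ∈ A, h (lam⁻¹ ^ k * w) ∈ D) (hfinj : InjOn f^[k] D) :
    InjOn h (A ∩ ball 0 (‖lam‖ ^ k * t)) := by
  have hiter : ∀ w, f^[k] (h w) = h (lam ^ k * w) := fun w ↦ by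
    simpa using ((Semiconj.iterate_right (fun w ↦ (hsemi w).symm) k) w).symm
  have hfactor : EqOn (f^[k] ∘ h ∘ (lam⁻¹ ^ k * ·)) h (A ∩ ball 0 (‖lam‖ ^ k * t)) :=
    fun w _ ↦ by simp [hiter, ← mul_assoc, mul_inv_cancel₀ (pow_ne_zero k hlam)]
  have hshrink : MapsTo (lam⁻¹ ^ k * ·) (A ∩ ball 0 (‖lam‖ ^ k * t)) (ball 0 t) := by
    rintro w ⟨-, hw⟩
    rw [mem_ball_zero_iff] at hw
    rwa [mem_ball_zero_iff, norm_mul, norm_pow, norm_inv, inv_pow,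
      inv_mul_lt_iff₀ (pow_pos (norm_pos_iff.mpr hlam) k)]
  have hscale : InjOn (lam⁻¹ ^ k * ·) (A ∩ ball 0 (‖lam‖ ^ k * t)) :=
    (mul_right_injective₀ (pow_ne_zero k (inv_ne_zero hlam))).injOn
  exact (hfinj.comp (hinj.comp hscale hshrink) fun w hw ↦ hmaps w hw.1).congr hfactor

/-- With `h` the Schröder map, `A_r` (open) such that
`h(λ^{-k} A_r) ⊆ D^{-k}` and `f^k` univalent on `D^{-k}`, and `h` injective on
`{|w| < t}`, the factorization `h = f^k ∘ h ∘ λ^{-k}` makes `h` injective on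
`{w ∈ A_r : |w| < |λ|^k t}` for every `k`; consequently `A_r` contains no critical
point of `h`. -/
theorem stmt_17 (f h : ℂ → ℂ) (hh : Differentiable ℂ h)
    (lam : ℂ) (hlam : 1 < ‖lam‖)
    (heq : ∀ w : ℂ, f (h w) = h (lam * w))
    (t : ℝ) (ht : 0 < t) (hinj : Set.InjOn h (Metric.ball 0 t))
    (Ar : Set ℂ) (hAr : IsOpen Ar) (Dk : ℕ → Set ℂ)
    (hmaps : ∀ k : ℕ, ∀ w ∈ Ar, h (lam⁻¹ ^ k * w) ∈ Dk k)
    (hfinj : ∀ k : ℕ, Set.InjOn (f^[k]) (Dk k)) :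
    (∀ k : ℕ, Set.InjOn h (Ar ∩ Metric.ball 0 (‖lam‖ ^ k * t))) ∧
    ∀ c ∈ Ar, deriv h c ≠ 0 := by
  have hlam0 : lam ≠ 0 := norm_pos_iff.mp (one_pos.trans hlam)
  have hinjk (k : ℕ) := injOn_inter_ball_of_semiconj heq hlam0 hinj k (hmaps k) (hfinj k)
  refine ⟨hinjk, fun c hc ↦ ?_⟩
  obtain ⟨k, hk⟩ := pow_unbounded_of_one_lt (‖c‖ / t) hlam
  have hck : c ∈ ball 0 (‖lam‖ ^ k * t) := by
    rwa [mem_ball_zero_iff, ← div_lt_iff₀ ht]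
  exact (hh.analyticAt c).deriv_ne_zero_of_injOn
    ((hAr.inter isOpen_ball).mem_nhds ⟨hc, hck⟩) (hinjk k)
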